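/- Let q : ℝ^d × Ω → ℝ be a strictly stationary mean-zero random field with E[q⁶] < ∞ that is ρ-mixing with mixing coefficient φ, meaning |E[(η − Eη)(ξ − Eξ)]| ≤ φ(2 d(A,B)) (E[η²] E[ξ²])^{1/2} for all random variables η measurable with respect to the σ-algebra generated by q on A and ξ measurable with respect to the σ-algebra generated by q on B, where d(A,B) is the Euclidean distance and φ is bounded and decreasing. Then for any four points x₁, x₂, x₃, x₄ ∈ ℝ^d, |E[q(x₁)q(x₂)q(x₃)q(x₄)]| ≤ C · sup over relabelings {y₁,y₂,y₃,y₄} = {x₁,x₂,x₃,x₄} of φ(|y₁−y₃|)^{1/2} φ(|y₂−y₄|)^{1/2} · E[q⁶]^{2/3}, where C is a universal constant. -/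

import Mathlib

open MeasureTheory

private lemma aux_abs_integral {Ω : Type*} [MeasurableSpace Ω] {P : Measure Ω}
    (f : Ω → ℝ) : |∫ ω, f ω ∂P| ≤ ∫ ω, |f ω| ∂P := by
  simpa [Real.norm_eq_abs] using norm_integral_le_integral_norm (μ := P) f

private lemma aux_cs {Ω : Type*} [MeasurableSpace Ω] {P : Measure Ω}
    {f g : Ω → ℝ} (hf2 : Integrable (fun ω => f ω ^ 2) P)
    (hg2 : Integrable (fun ω => g ω ^ 2) P)
    (hfg : Integrable (fun ω => f ω * g ω) P) :
    |∫ ω, f ω * g ω ∂P| ≤ Real.sqrt ((∫ ω, f ω ^ 2 ∂P) * (∫ ω, g ω ^ 2 ∂P)) := by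
  set A := ∫ ω, f ω ^ 2 ∂P with hA
  set B := ∫ ω, g ω ^ 2 ∂P with hB
  have hA0 : 0 ≤ A := integral_nonneg fun ω => sq_nonneg _
  have hB0 : 0 ≤ B := integral_nonneg fun ω => sq_nonneg _
  rcases eq_or_lt_of_le hA0 with hAz | hApos
  · have : (fun ω => f ω ^ 2) =ᵐ[P] 0 :=
      (integral_eq_zero_iff_of_nonneg (fun ω => sq_nonneg _) hf2).mp hAz.symm
    have hf0 : f =ᵐ[P] 0 := this.mono fun ω hω => by
      simpa [pow_eq_zero_iff] using hω
    have : (fun ω => f ω * g ω) =ᵐ[P] 0 := hf0.mono fun ω hω => by simp [hω]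
    rw [integral_congr_ae this]
    simp
  rcases eq_or_lt_of_le hB0 with hBz | hBpos
  · have : (fun ω => g ω ^ 2) =ᵐ[P] 0 :=
      (integral_eq_zero_iff_of_nonneg (fun ω => sq_nonneg _) hg2).mp hBz.symm
    have hg0 : g =ᵐ[P] 0 := this.mono fun ω hω => by
      simpa [pow_eq_zero_iff] using hω
    have : (fun ω => f ω * g ω) =ᵐ[P] 0 := hg0.mono fun ω hω => by simp [hω]
    rw [integral_congr_ae this]
    simp
  set ε := Real.sqrt B / Real.sqrt A with hε
  have hεpos : 0 < ε := div_pos (Real.sqrt_pos.mpr hBpos) (Real.sqrt_pos.mpr hApos)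
  have hpt : ∀ ω, |f ω * g ω| ≤ (ε * f ω ^ 2 + g ω ^ 2 / ε) / 2 := by
    intro ω
    have key : 2 * ε * |f ω * g ω| ≤ ε ^ 2 * f ω ^ 2 + g ω ^ 2 := by
      rcases abs_cases (f ω * g ω) with ⟨h1, _⟩ | ⟨h1, _⟩ <;> rw [h1] <;>
        nlinarith [sq_nonneg (ε * f ω + g ω), sq_nonneg (ε * f ω - g ω)]
    rw [← sub_nonneg]
    have heq : (ε * f ω ^ 2 + g ω ^ 2 / ε) / 2 - |f ω * g ω|
        = (ε ^ 2 * f ω ^ 2 + g ω ^ 2 - 2 * ε * |f ω * g ω|) / (2 * ε) := by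
      field_simp
    rw [heq]
    apply div_nonneg (by linarith) (by linarith)
  have hint : |∫ ω, f ω * g ω ∂P| ≤ ∫ ω, (ε * f ω ^ 2 + g ω ^ 2 / ε) / 2 ∂P := by
    refine (aux_abs_integral _).trans ?_
    exact integral_mono hfg.abs (((hf2.const_mul ε).add (hg2.div_const ε)).div_const 2) hpt
  have hval : ∫ ω, (ε * f ω ^ 2 + g ω ^ 2 / ε) / 2 ∂P = (ε * A + B / ε) / 2 := by
    rw [integral_div, integral_add (hf2.const_mul ε) (hg2.div_const ε),
      integral_const_mul, integral_div]
  rw [hval] at hint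
  have hsq : ε * A + B / ε = 2 * Real.sqrt (A * B) := by
    have hsA : Real.sqrt A * Real.sqrt A = A := Real.mul_self_sqrt hA0
    have hsB : Real.sqrt B * Real.sqrt B = B := Real.mul_self_sqrt hB0
    have hsApos : 0 < Real.sqrt A := Real.sqrt_pos.mpr hApos
    have hsBpos : 0 < Real.sqrt B := Real.sqrt_pos.mpr hBpos
    rw [Real.sqrt_mul hA0, hε]
    field_simp
    nlinarith [hsA, hsB]
  calc |∫ ω, f ω * g ω ∂P| ≤ (ε * A + B / ε) / 2 := hint
    _ = Real.sqrt (A * B) := by rw [hsq]; ring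

private lemma aux_sq_integrable {Ω : Type*} [MeasurableSpace Ω] {P : Measure Ω}
    {g : Ω → ℝ} (hm : Measurable g) (h0 : ∀ ω, 0 ≤ g ω) (hg : Integrable g P)
    {K : ℝ} (h : ∀ n : ℕ, ∫ ω, g ω * min (g ω) n ∂P ≤ K) :
    Integrable (fun ω => g ω ^ 2) P := by
  have hmn : ∀ n : ℕ, Measurable fun ω => g ω * min (g ω) n :=
    fun n => hm.mul (hm.min measurable_const)
  have hintn : ∀ n : ℕ, Integrable (fun ω => g ω * min (g ω) n) P := by
    intro n
    refine Integrable.mono' (hg.const_mul n) (hmn n).aestronglyMeasurable ?_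
    filter_upwards with ω
    have h1 : 0 ≤ min (g ω) n := le_min (h0 ω) (Nat.cast_nonneg n)
    rw [Real.norm_eq_abs, abs_of_nonneg (mul_nonneg (h0 ω) h1)]
    calc g ω * min (g ω) n ≤ g ω * n := mul_le_mul_of_nonneg_left (min_le_right _ _) (h0 ω)
      _ = n * g ω := mul_comm _ _
  have hnn : ∀ n : ℕ, (0:ℝ) ≤ K := fun n => le_trans (integral_nonneg fun ω =>
    mul_nonneg (h0 ω) (le_min (h0 ω) (Nat.cast_nonneg n))) (h n)
  have hlin : ∀ n : ℕ, ∫⁻ ω, ENNReal.ofReal (g ω * min (g ω) n) ∂P ≤ ENNReal.ofReal K := by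
    intro n
    rw [← ofReal_integral_eq_lintegral_ofReal (hintn n) (Filter.Eventually.of_forall fun ω =>
      mul_nonneg (h0 ω) (le_min (h0 ω) (Nat.cast_nonneg n)))]
    exact ENNReal.ofReal_le_ofReal (h n)
  have hsup : ∫⁻ ω, ENNReal.ofReal (g ω ^ 2) ∂P
      = ⨆ n : ℕ, ∫⁻ ω, ENNReal.ofReal (g ω * min (g ω) n) ∂P := by
    rw [← lintegral_iSup (fun n => ((hmn n).ennreal_ofReal))]
    · congr 1
      funext ω
      apply le_antisymm
      · refine le_iSup_of_le ⌈g ω⌉₊ ?_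
        rw [min_eq_left (Nat.le_ceil _)]
        exact ENNReal.ofReal_le_ofReal (by nlinarith [h0 ω])
      · exact iSup_le fun n => ENNReal.ofReal_le_ofReal
          (by nlinarith [min_le_left (g ω) (n:ℝ), h0 ω, le_min (h0 ω) (Nat.cast_nonneg (α := ℝ) n)])
    · intro i j hij ω
      exact ENNReal.ofReal_le_ofReal (mul_le_mul_of_nonneg_left
        (min_le_min le_rfl (Nat.cast_le.mpr hij)) (h0 ω))
  refine ⟨(hm.pow_const 2).aestronglyMeasurable, ?_⟩
  rw [hasFiniteIntegral_iff_norm]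
  have : ∀ ω, ENNReal.ofReal ‖g ω ^ 2‖ = ENNReal.ofReal (g ω ^ 2) := fun ω => by
    rw [Real.norm_eq_abs, abs_of_nonneg (sq_nonneg _)]
  calc ∫⁻ ω, ENNReal.ofReal ‖g ω ^ 2‖ ∂P = ∫⁻ ω, ENNReal.ofReal (g ω ^ 2) ∂P := by
        simp_rw [this]
    _ = ⨆ n : ℕ, ∫⁻ ω, ENNReal.ofReal (g ω * min (g ω) n) ∂P := hsup
    _ ≤ ENNReal.ofReal K := iSup_le hlin
    _ < ⊤ := ENNReal.ofReal_lt_top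

private lemma amgm3 (u v w : ℝ) (hu : 0 ≤ u) (hv : 0 ≤ v) (hw : 0 ≤ w) :
    u * v * w ≤ (u ^ 3 + v ^ 3 + w ^ 3) / 3 := by
  have h : 0 ≤ (u + v + w) * ((u - v) ^ 2 + (v - w) ^ 2 + (u - w) ^ 2) := by positivity
  nlinarith [h]

private lemma pt_abs1 (t : ℝ) : |t| ≤ 1 + t ^ 2 := by
  rcases abs_cases t with ⟨h, _⟩ | ⟨h, _⟩ <;> rw [h] <;> nlinarith [sq_nonneg (t - 1), sq_nonneg (t + 1)]

private lemma pt_sq6 (t : ℝ) : t ^ 2 ≤ 1 + t ^ 6 := by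
  nlinarith [sq_nonneg (t ^ 3 - t), sq_nonneg (t ^ 2 - 1), sq_nonneg t, sq_nonneg (t ^ 2)]

private lemma pt_four6 (t : ℝ) : t ^ 4 ≤ 1 + t ^ 6 := by
  nlinarith [sq_nonneg (t ^ 3 - t), sq_nonneg (t ^ 2 - 1), sq_nonneg t]

private lemma pt_mul2 (a b : ℝ) : |a * b| ≤ a ^ 2 + b ^ 2 := by
  rcases abs_cases (a * b) with ⟨h, _⟩ | ⟨h, _⟩ <;> rw [h] <;>
    nlinarith [sq_nonneg (a - b), sq_nonneg (a + b)]

private lemma pt_mul22 (a b : ℝ) : (a * b) ^ 2 ≤ a ^ 4 + b ^ 4 := by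
  nlinarith [sq_nonneg (a ^ 2 - b ^ 2)]

private lemma pt_mul33 (a b c : ℝ) : (a * b * c) ^ 2 ≤ (a ^ 6 + b ^ 6 + c ^ 6) / 3 := by
  have := amgm3 (a ^ 2) (b ^ 2) (c ^ 2) (sq_nonneg _) (sq_nonneg _) (sq_nonneg _)
  nlinarith [this]

private lemma pt_mul3 (a b c : ℝ) : |a * b * c| ≤ 1 + (a ^ 6 + b ^ 6 + c ^ 6) := by
  have h1 := pt_mul33 a b c
  have h2 := pt_abs1 (a * b * c)
  calc |a * b * c| ≤ 1 + (a * b * c) ^ 2 := h2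
    _ ≤ 1 + (a ^ 6 + b ^ 6 + c ^ 6) := by nlinarith [h1]

private lemma pt_mul4 (a b c d : ℝ) : |a * b * (c * d)| ≤ (a ^ 4 + b ^ 4) + (c ^ 4 + d ^ 4) := by
  rcases abs_cases (a * b * (c * d)) with ⟨h, _⟩ | ⟨h, _⟩ <;> rw [h] <;>
    nlinarith [sq_nonneg (a * b - c * d), sq_nonneg (a * b + c * d),
      sq_nonneg (a ^ 2 - b ^ 2), sq_nonneg (c ^ 2 - d ^ 2)]

set_option maxHeartbeats 1000000 in

/-- Four-point moment bound for a mean-zero, strictly stationary, ρ-mixing random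
field with finite sixth moment: there is a universal constant `C` such that
`|E[q(x₁)q(x₂)q(x₃)q(x₄)]| ≤ C · sup_{relabelings} φ(|y₁−y₃|)^{1/2} φ(|y₂−y₄|)^{1/2} · E[q⁶]^{2/3}`. -/
theorem four_point_mixing_bound :
    ∃ C : ℝ, 0 < C ∧
      ∀ (d : ℕ) (Ω : Type) (_ : MeasurableSpace Ω) (P : Measure Ω),
        IsProbabilityMeasure P →
        ∀ (q : EuclideanSpace ℝ (Fin d) → Ω → ℝ) (φ : ℝ → ℝ) (M : ℝ),
        (∀ x, Measurable (q x)) →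
        -- mean zero
        (∀ x, ∫ ω, q x ω ∂P = 0) →
        -- strict stationarity
        (∀ (z : EuclideanSpace ℝ (Fin d)) (n : ℕ) (xs : Fin n → EuclideanSpace ℝ (Fin d)),
          Measure.map (fun ω (i : Fin n) => q (xs i + z) ω) P
            = Measure.map (fun ω (i : Fin n) => q (xs i) ω) P) →
        -- finite sixth moment, bounded by M
        (∀ x, ∫ ω, (q x ω) ^ 6 ∂P ≤ M) →
        -- φ bounded, decreasing, nonnegative
        (∃ Cb : ℝ, ∀ r : ℝ, 0 ≤ r → φ r ≤ Cb) →
        (∀ r s : ℝ, 0 ≤ r → r ≤ s → φ s ≤ φ r) →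
        (∀ r : ℝ, 0 ≤ φ r) →
        -- ρ-mixing condition with coefficient φ(2 d(A,B))
        (∀ (A B : Set (EuclideanSpace ℝ (Fin d))) (r : ℝ), 0 ≤ r →
          (∀ a ∈ A, ∀ b ∈ B, r ≤ dist a b) →
          ∀ η ξ : Ω → ℝ,
            Measurable[⨆ x ∈ A, MeasurableSpace.comap (q x) (borel ℝ)] η →
            Measurable[⨆ x ∈ B, MeasurableSpace.comap (q x) (borel ℝ)] ξ →
            |∫ ω, (η ω - ∫ ω', η ω' ∂P) * (ξ ω - ∫ ω', ξ ω' ∂P) ∂P| ≤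
              φ (2 * r) * Real.sqrt ((∫ ω, (η ω) ^ 2 ∂P) * (∫ ω, (ξ ω) ^ 2 ∂P))) →
        ∀ x : Fin 4 → EuclideanSpace ℝ (Fin d),
          |∫ ω, q (x 0) ω * q (x 1) ω * q (x 2) ω * q (x 3) ω ∂P| ≤
            C * ((Finset.univ : Finset (Equiv.Perm (Fin 4))).sup'
                  (Finset.univ_nonempty) (fun σ =>
                    Real.sqrt (φ (dist (x (σ 0)) (x (σ 2)))) *
                      Real.sqrt (φ (dist (x (σ 1)) (x (σ 3)))))) *
              M ^ ((2 : ℝ) / 3) := by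
  refine ⟨2, by norm_num, ?_⟩
  intro d Ω mΩ P hP q φ M hqm hmean hstat hM6 hφb hφdec hφ0 hmix x
  -- basic facts
  have hM0 : 0 ≤ M := le_trans (integral_nonneg fun ω => by positivity) (hM6 (x 0))
  set S := (Finset.univ : Finset (Equiv.Perm (Fin 4))).sup'
      (Finset.univ_nonempty) (fun σ =>
        Real.sqrt (φ (dist (x (σ 0)) (x (σ 2)))) *
          Real.sqrt (φ (dist (x (σ 1)) (x (σ 3))))) with hSdef
  have hS1 : Real.sqrt (φ (dist (x 0) (x 2))) * Real.sqrt (φ (dist (x 1) (x 3))) ≤ S := by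
    have := Finset.le_sup' (f := fun σ : Equiv.Perm (Fin 4) =>
      Real.sqrt (φ (dist (x (σ 0)) (x (σ 2)))) * Real.sqrt (φ (dist (x (σ 1)) (x (σ 3)))))
      (Finset.mem_univ (1 : Equiv.Perm (Fin 4)))
    have e0 : (1 : Equiv.Perm (Fin 4)) 0 = 0 := by decide
    have e1 : (1 : Equiv.Perm (Fin 4)) 1 = 1 := by decide
    have e2 : (1 : Equiv.Perm (Fin 4)) 2 = 2 := by decide
    have e3 : (1 : Equiv.Perm (Fin 4)) 3 = 3 := by decide
    rw [e0, e1, e2, e3] at this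
    exact this
  have hS2 : Real.sqrt (φ (dist (x 0) (x 1))) * Real.sqrt (φ (dist (x 2) (x 3))) ≤ S := by
    have := Finset.le_sup' (f := fun σ : Equiv.Perm (Fin 4) =>
      Real.sqrt (φ (dist (x (σ 0)) (x (σ 2)))) * Real.sqrt (φ (dist (x (σ 1)) (x (σ 3)))))
      (Finset.mem_univ (Equiv.swap (1 : Fin 4) 2))
    have e0 : (Equiv.swap (1 : Fin 4) 2) 0 = 0 := by decide
    have e1 : (Equiv.swap (1 : Fin 4) 2) 1 = 2 := by decide
    have e2 : (Equiv.swap (1 : Fin 4) 2) 2 = 1 := by decide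
    have e3 : (Equiv.swap (1 : Fin 4) 2) 3 = 3 := by decide
    rw [e0, e1, e2, e3] at this
    exact this
  have hS3 : Real.sqrt (φ (dist (x 0) (x 3))) * Real.sqrt (φ (dist (x 1) (x 2))) ≤ S := by
    have := Finset.le_sup' (f := fun σ : Equiv.Perm (Fin 4) =>
      Real.sqrt (φ (dist (x (σ 0)) (x (σ 2)))) * Real.sqrt (φ (dist (x (σ 1)) (x (σ 3)))))
      (Finset.mem_univ (Equiv.swap (2 : Fin 4) 3))
    have e0 : (Equiv.swap (2 : Fin 4) 3) 0 = 0 := by decide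
    have e1 : (Equiv.swap (2 : Fin 4) 3) 1 = 1 := by decide
    have e2 : (Equiv.swap (2 : Fin 4) 3) 2 = 3 := by decide
    have e3 : (Equiv.swap (2 : Fin 4) 3) 3 = 2 := by decide
    rw [e0, e1, e2, e3] at this
    exact this
  have hS0 : 0 ≤ S := le_trans (mul_nonneg (Real.sqrt_nonneg _) (Real.sqrt_nonneg _)) hS1
  have hM23 : (0:ℝ) ≤ M ^ ((2:ℝ)/3) := Real.rpow_nonneg hM0 _
  -- measurability w.r.t. generated σ-algebras
  have hqle : ∀ (A : Set (EuclideanSpace ℝ (Fin d))) (y), y ∈ A →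
      Measurable[⨆ x ∈ A, MeasurableSpace.comap (q x) (borel ℝ)] (q y) := by
    intro A y hy
    have h1 : Measurable[MeasurableSpace.comap (q y) (borel ℝ)] (q y) := by
      intro s hs
      exact ⟨s, hs, rfl⟩
    exact h1.mono
      (le_iSup₂ (f := fun x (_ : x ∈ A) => MeasurableSpace.comap (q x) (borel ℝ)) y hy) le_rfl
  have hqleU : ∀ y, Measurable[⨆ x ∈ (Set.univ : Set (EuclideanSpace ℝ (Fin d))),
      MeasurableSpace.comap (q x) (borel ℝ)] (q y) := fun y => hqle _ y (Set.mem_univ y)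
  have hmixU := hmix Set.univ Set.univ 0 le_rfl (fun a _ b _ => dist_nonneg)
  -- identical one-point distributions via stationarity
  have hmap : ∀ y z : EuclideanSpace ℝ (Fin d), Measure.map (q y) P = Measure.map (q z) P := by
    intro y z
    have h := hstat (y - z) 1 (fun _ => z)
    have h2 : (fun ω (i : Fin 1) => q ((fun _ : Fin 1 => z) i + (y - z)) ω)
        = fun ω (_ : Fin 1) => q y ω := by
      funext ω i
      congr 1
      abel
    rw [h2] at h
    have e0 : ∀ w : EuclideanSpace ℝ (Fin d), Measure.map (q w) P
        = Measure.map (fun v : Fin 1 → ℝ => v 0)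
            (Measure.map (fun ω (_ : Fin 1) => q w ω) P) := by
      intro w
      rw [Measure.map_map (measurable_pi_apply 0)
        (measurable_pi_lambda _ (fun _ => hqm w))]
      rfl
    rw [e0 y, e0 z, h]
  have hint6 : ∀ y z : EuclideanSpace ℝ (Fin d),
      Integrable (fun ω => q y ω ^ 6) P → Integrable (fun ω => q z ω ^ 6) P := by
    intro y z h
    have hp6 : Measurable (fun t : ℝ => t ^ 6) := by fun_prop
    have h1 : Integrable (fun t : ℝ => t ^ 6) (Measure.map (q y) P) :=
      (integrable_map_measure hp6.aestronglyMeasurable (hqm y).aemeasurable).mpr h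
    rw [hmap y z] at h1
    exact (integrable_map_measure hp6.aestronglyMeasurable (hqm z).aemeasurable).mp h1
  -- step lemmas ruling out intermediate integrability failures
  have Lstep2 : ∀ y, Integrable (fun ω => q y ω ^ 4) P → Integrable (fun ω => q y ω ^ 6) P := by
    intro y h4
    by_contra h6
    have hz : ∫ ω, (q y ω ^ 3) ^ 2 ∂P = 0 := by
      apply integral_undef
      intro hc
      exact h6 (hc.congr (Filter.Eventually.of_forall fun ω => by ring))
    have h1 : Integrable (q y) P := by
      refine Integrable.mono' ((integrable_const 1).add h4) (hqm y).aestronglyMeasurable ?_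
      filter_upwards with ω
      rw [Real.norm_eq_abs]
      simp only [Pi.add_apply]
      rcases abs_cases (q y ω) with ⟨h, _⟩ | ⟨h, _⟩ <;> rw [h] <;>
        nlinarith [sq_nonneg (q y ω), sq_nonneg (q y ω ^ 2), sq_nonneg (q y ω ^ 2 - 1),
          sq_nonneg (q y ω + 1), sq_nonneg (q y ω - 1)]
    have hη : Measurable[⨆ x ∈ (Set.univ : Set (EuclideanSpace ℝ (Fin d))),
        MeasurableSpace.comap (q x) (borel ℝ)] (fun ω => q y ω ^ 3) := (hqleU y).pow_const 3
    have hb := hmixU (fun ω => q y ω ^ 3) (q y) hη (hqleU y)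
    rw [hz, hmean y] at hb
    rw [zero_mul, Real.sqrt_zero, mul_zero] at hb
    have hzero := abs_nonpos_iff.mp hb
    set m := ∫ ω', q y ω' ^ 3 ∂P with hm
    have hre : (fun ω => (q y ω ^ 3 - m) * (q y ω - 0))
        = fun ω => q y ω ^ 4 - m * q y ω := funext fun ω => by ring
    rw [hre] at hzero
    rw [integral_sub (h4.congr (Filter.Eventually.of_forall fun ω => by norm_num))
      (h1.const_mul m), integral_const_mul, hmean y, mul_zero, sub_zero] at hzero
    have hae : (fun ω => q y ω ^ 4) =ᵐ[P] 0 := by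
      refine (integral_eq_zero_iff_of_nonneg (fun ω => by positivity) ?_).mp hzero
      exact h4
    have hae6 : (fun ω => q y ω ^ 6) =ᵐ[P] 0 := by
      filter_upwards [hae] with ω hω
      simp only [Pi.zero_apply] at hω ⊢
      have : q y ω = 0 := pow_eq_zero_iff (by norm_num : (4:ℕ) ≠ 0) |>.mp hω
      simp [this]
    exact h6 ((integrable_zero _ _ _).congr hae6.symm)
  have Lstep1 : ∀ y, Integrable (fun ω => q y ω ^ 2) P → Integrable (fun ω => q y ω ^ 4) P := by
    intro y h2
    by_contra h4
    have hz : ∫ ω, (q y ω ^ 2) ^ 2 ∂P = 0 := by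
      apply integral_undef
      intro hc
      exact h4 (hc.congr (Filter.Eventually.of_forall fun ω => by ring))
    set m := ∫ ω', q y ω' ^ 2 ∂P with hm
    have hm0 : 0 ≤ m := integral_nonneg fun ω => sq_nonneg _
    have hkey : ∀ n : ℕ, ∫ ω, q y ω ^ 2 * min (q y ω ^ 2) n ∂P ≤ m ^ 2 := by
      intro n
      set ξ : Ω → ℝ := fun ω => min (q y ω ^ 2) n with hξ
      have hξint : Integrable ξ P := by
        refine Integrable.mono' (integrable_const (n : ℝ)) ?_ ?_
        · exact ((hqm y).pow_const 2).min measurable_const |>.aestronglyMeasurable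
        · filter_upwards with ω
          rw [Real.norm_eq_abs, abs_of_nonneg (le_min (sq_nonneg _) (Nat.cast_nonneg n))]
          exact min_le_right _ _
      set t := ∫ ω', ξ ω' ∂P with ht
      have ht0 : 0 ≤ t := integral_nonneg fun ω => le_min (sq_nonneg _) (Nat.cast_nonneg n)
      have htm : t ≤ m := integral_mono hξint h2 (fun ω => min_le_left _ _)
      have hη : Measurable[⨆ x ∈ (Set.univ : Set (EuclideanSpace ℝ (Fin d))),
          MeasurableSpace.comap (q x) (borel ℝ)] (fun ω => q y ω ^ 2) := (hqleU y).pow_const 2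
      have hξm : Measurable[⨆ x ∈ (Set.univ : Set (EuclideanSpace ℝ (Fin d))),
          MeasurableSpace.comap (q x) (borel ℝ)] ξ := ((hqleU y).pow_const 2).min measurable_const
      have hb := hmixU (fun ω => q y ω ^ 2) ξ hη hξm
      rw [hz] at hb
      rw [zero_mul, Real.sqrt_zero, mul_zero] at hb
      have hzero := abs_nonpos_iff.mp hb
      -- expand
      have hq2ξ : Integrable (fun ω => q y ω ^ 2 * ξ ω) P := by
        refine Integrable.mono' (h2.const_mul (n : ℝ)) ?_ ?_
        · exact (((hqm y).pow_const 2).mul (((hqm y).pow_const 2).min measurable_const)).aestronglyMeasurable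
        · filter_upwards with ω
          have h1 : 0 ≤ ξ ω := le_min (sq_nonneg _) (Nat.cast_nonneg n)
          rw [Real.norm_eq_abs, abs_of_nonneg (mul_nonneg (sq_nonneg _) h1)]
          calc q y ω ^ 2 * ξ ω ≤ q y ω ^ 2 * n :=
                mul_le_mul_of_nonneg_left (min_le_right _ _) (sq_nonneg _)
            _ = n * q y ω ^ 2 := mul_comm _ _
      have hre : (fun ω => (q y ω ^ 2 - m) * (ξ ω - t))
          = fun ω => q y ω ^ 2 * ξ ω - m * ξ ω - t * q y ω ^ 2 + m * t :=
        funext fun ω => by ring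
      rw [hre] at hzero
      have hintB : Integrable (fun ω => q y ω ^ 2 * ξ ω - m * ξ ω) P :=
        hq2ξ.sub (hξint.const_mul m)
      have hintA : Integrable (fun ω => q y ω ^ 2 * ξ ω - m * ξ ω - t * q y ω ^ 2) P :=
        hintB.sub (h2.const_mul t)
      rw [integral_add hintA (integrable_const _), integral_sub hintB (h2.const_mul t),
        integral_sub hq2ξ (hξint.const_mul m), integral_const_mul, integral_const_mul,
        integral_const] at hzero
      simp only [measure_univ, ENNReal.toReal_one, probReal_univ, smul_eq_mul, one_mul] at hzero
      have hq2xi : ∫ ω, q y ω ^ 2 * ξ ω ∂P = m * t := by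
        rw [← hm, ← ht] at hzero
        linarith
      calc ∫ ω, q y ω ^ 2 * min (q y ω ^ 2) (n:ℝ) ∂P = ∫ ω, q y ω ^ 2 * ξ ω ∂P := rfl
        _ = m * t := hq2xi
        _ ≤ m ^ 2 := by nlinarith [htm, ht0, hm0]
    have : Integrable (fun ω => (q y ω ^ 2) ^ 2) P := by
      refine aux_sq_integrable ((hqm y).pow_const 2) (fun ω => sq_nonneg _) h2 hkey
    exact h4 (this.congr (Filter.Eventually.of_forall fun ω => by ring))
  by_cases hgood : ∀ i : Fin 4, Integrable (fun ω => q (x i) ω ^ 6) P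
  · -- good case
    rcases eq_or_lt_of_le hM0 with hMeq | hMpos
    · -- M = 0
      have hz6 : ∫ ω, q (x 0) ω ^ 6 ∂P = 0 :=
        le_antisymm (hMeq ▸ hM6 (x 0)) (integral_nonneg fun ω => by positivity)
      have hae : (fun ω => q (x 0) ω ^ 6) =ᵐ[P] 0 :=
        (integral_eq_zero_iff_of_nonneg (fun ω => by positivity) (hgood 0)).mp hz6
      have haeQ : (fun ω => q (x 0) ω * q (x 1) ω * q (x 2) ω * q (x 3) ω)
          =ᵐ[P] (fun _ => (0:ℝ)) := by
        filter_upwards [hae] with ω hω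
        simp only [Pi.zero_apply] at hω ⊢
        have : q (x 0) ω = 0 := pow_eq_zero_iff (by norm_num : (6:ℕ) ≠ 0) |>.mp hω
        simp [this]
      rw [integral_congr_ae haeQ, integral_zero, abs_zero, ← hMeq,
        Real.zero_rpow (by norm_num : ((2:ℝ)/3) ≠ 0), mul_zero]
    -- now 0 < M
    set M13 := M ^ ((1:ℝ)/3) with hM13def
    set M23 := M ^ ((2:ℝ)/3) with hM23def
    have hM13pos : 0 < M13 := Real.rpow_pos_of_pos hMpos _
    have hM23pos : 0 < M23 := Real.rpow_pos_of_pos hMpos _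
    have hM13cube : M13 ^ 3 = M := by
      rw [hM13def, ← Real.rpow_natCast (M ^ ((1:ℝ)/3)) 3, ← Real.rpow_mul hM0]
      norm_num
    have hMM : M13 * M23 = M := by
      rw [hM13def, hM23def, ← Real.rpow_add hMpos]
      norm_num
    have h1323 : M13 * M13 = M23 := by
      rw [hM13def, hM23def, ← Real.rpow_add hMpos]
      norm_num
    have hsqrt23 : Real.sqrt (M23 * M23) = M23 := Real.sqrt_mul_self hM23pos.le
    have hsqrt13 : Real.sqrt (M13 * M13) = M13 := Real.sqrt_mul_self hM13pos.le
    have hsqrt1M : Real.sqrt (M13 * M) = M23 := by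
      rw [← hMM, ← mul_assoc, h1323, hsqrt23]
    -- integrability pack
    have I4 : ∀ y, Integrable (fun ω => q y ω ^ 6) P → Integrable (fun ω => q y ω ^ 4) P := by
      intro y hy
      refine Integrable.mono' ((integrable_const 1).add hy) ((hqm y).pow_const 4).aestronglyMeasurable ?_
      filter_upwards with ω
      rw [Real.norm_eq_abs, abs_of_nonneg (by positivity)]
      simp only [Pi.add_apply]
      exact pt_four6 (q y ω)
    have I2 : ∀ y, Integrable (fun ω => q y ω ^ 6) P → Integrable (fun ω => q y ω ^ 2) P := by
      intro y hy
      refine Integrable.mono' ((integrable_const 1).add hy) ((hqm y).pow_const 2).aestronglyMeasurable ?_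
      filter_upwards with ω
      rw [Real.norm_eq_abs, abs_of_nonneg (by positivity)]
      simp only [Pi.add_apply]
      exact pt_sq6 (q y ω)
    have I1 : ∀ y, Integrable (fun ω => q y ω ^ 6) P → Integrable (q y) P := by
      intro y hy
      refine Integrable.mono' ((integrable_const 1).add (I2 y hy)) (hqm y).aestronglyMeasurable ?_
      filter_upwards with ω
      rw [Real.norm_eq_abs]
      simp only [Pi.add_apply]
      exact pt_abs1 (q y ω)
    have P2 : ∀ y z, Integrable (fun ω => q y ω ^ 6) P → Integrable (fun ω => q z ω ^ 6) P →
        Integrable (fun ω => q y ω * q z ω) P := by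
      intro y z hy hz
      refine Integrable.mono' ((I2 y hy).add (I2 z hz)) ((hqm y).mul (hqm z)).aestronglyMeasurable ?_
      filter_upwards with ω
      rw [Real.norm_eq_abs]
      simp only [Pi.add_apply]
      exact pt_mul2 (q y ω) (q z ω)
    have P22 : ∀ y z, Integrable (fun ω => q y ω ^ 6) P → Integrable (fun ω => q z ω ^ 6) P →
        Integrable (fun ω => (q y ω * q z ω) ^ 2) P := by
      intro y z hy hz
      refine Integrable.mono' ((I4 y hy).add (I4 z hz))
        (((hqm y).mul (hqm z)).pow_const 2).aestronglyMeasurable ?_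
      filter_upwards with ω
      rw [Real.norm_eq_abs, abs_of_nonneg (by positivity)]
      simp only [Pi.add_apply]
      exact pt_mul22 (q y ω) (q z ω)
    have P3 : ∀ y z w, Integrable (fun ω => q y ω ^ 6) P → Integrable (fun ω => q z ω ^ 6) P →
        Integrable (fun ω => q w ω ^ 6) P →
        Integrable (fun ω => q y ω * q z ω * q w ω) P := by
      intro y z w hy hz hw
      refine Integrable.mono' ((integrable_const 1).add ((hy.add hz).add hw))
        (((hqm y).mul (hqm z)).mul (hqm w)).aestronglyMeasurable ?_
      filter_upwards with ω
      rw [Real.norm_eq_abs]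
      simp only [Pi.add_apply]
      have := pt_mul3 (q y ω) (q z ω) (q w ω)
      linarith
    have P33 : ∀ y z w, Integrable (fun ω => q y ω ^ 6) P → Integrable (fun ω => q z ω ^ 6) P →
        Integrable (fun ω => q w ω ^ 6) P →
        Integrable (fun ω => (q y ω * q z ω * q w ω) ^ 2) P := by
      intro y z w hy hz hw
      refine Integrable.mono' ((hy.add hz).add hw)
        ((((hqm y).mul (hqm z)).mul (hqm w)).pow_const 2).aestronglyMeasurable ?_
      filter_upwards with ω
      rw [Real.norm_eq_abs, abs_of_nonneg (by positivity)]
      simp only [Pi.add_apply]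
      have := pt_mul33 (q y ω) (q z ω) (q w ω)
      have h1 : (0:ℝ) ≤ q y ω ^ 6 := by positivity
      have h2 : (0:ℝ) ≤ q z ω ^ 6 := by positivity
      have h3 : (0:ℝ) ≤ q w ω ^ 6 := by positivity
      linarith
    have PQ : ∀ a b c dd, Integrable (fun ω => q a ω ^ 6) P → Integrable (fun ω => q b ω ^ 6) P →
        Integrable (fun ω => q c ω ^ 6) P → Integrable (fun ω => q dd ω ^ 6) P →
        Integrable (fun ω => (q a ω * q b ω) * (q c ω * q dd ω)) P := by
      intro a b c dd ha hb hc hd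
      refine Integrable.mono' (((I4 a ha).add (I4 b hb)).add ((I4 c hc).add (I4 dd hd)))
        ((((hqm a).mul (hqm b)).mul ((hqm c).mul (hqm dd)))).aestronglyMeasurable ?_
      filter_upwards with ω
      rw [Real.norm_eq_abs]
      simp only [Pi.add_apply]
      exact pt_mul4 (q a ω) (q b ω) (q c ω) (q dd ω)
    -- moment bounds
    have hm2 : ∀ y, Integrable (fun ω => q y ω ^ 6) P → ∫ ω, q y ω ^ 2 ∂P ≤ M13 := by
      intro y hy
      have hpt : ∀ ω, q y ω ^ 2 * M13 ^ 2 ≤ (q y ω ^ 6 + 2 * M) / 3 := by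
        intro ω
        have := amgm3 (q y ω ^ 2) M13 M13 (sq_nonneg _) hM13pos.le hM13pos.le
        nlinarith [this, hM13cube]
      have hint : ∫ ω, q y ω ^ 2 * M13 ^ 2 ∂P ≤ ∫ ω, (q y ω ^ 6 + 2 * M) / 3 ∂P :=
        integral_mono ((I2 y hy).mul_const _) ((hy.add (integrable_const _)).div_const 3)
          hpt
      rw [integral_mul_const] at hint
      rw [integral_div, integral_add hy (integrable_const _), integral_const] at hint
      simp only [measure_univ, ENNReal.toReal_one, probReal_univ, smul_eq_mul, one_mul] at hint
      have h6 := hM6 y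
      have h20 : 0 ≤ ∫ ω, q y ω ^ 2 ∂P := integral_nonneg fun ω => sq_nonneg _
      nlinarith [hM13pos, hM13cube, mul_pos hM13pos hM13pos]
    have hm4 : ∀ y z, Integrable (fun ω => q y ω ^ 6) P → Integrable (fun ω => q z ω ^ 6) P →
        ∫ ω, (q y ω * q z ω) ^ 2 ∂P ≤ M23 := by
      intro y z hy hz
      have hpt : ∀ ω, (q y ω * q z ω) ^ 2 * M13 ≤ (q y ω ^ 6 + q z ω ^ 6 + M) / 3 := by
        intro ω
        have := amgm3 (q y ω ^ 2) (q z ω ^ 2) M13 (sq_nonneg _) (sq_nonneg _) hM13pos.le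
        nlinarith [this, hM13cube]
      have hint : ∫ ω, (q y ω * q z ω) ^ 2 * M13 ∂P ≤ ∫ ω, (q y ω ^ 6 + q z ω ^ 6 + M) / 3 ∂P :=
        integral_mono ((P22 y z hy hz).mul_const _)
          (((hy.add hz).add (integrable_const _)).div_const 3) hpt
      rw [integral_mul_const] at hint
      have hyz : Integrable (fun ω => q y ω ^ 6 + q z ω ^ 6) P := hy.add hz
      rw [integral_div, integral_add hyz (integrable_const _),
        integral_add hy hz, integral_const] at hint
      simp only [measure_univ, ENNReal.toReal_one, probReal_univ, smul_eq_mul, one_mul] at hint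
      have h6y := hM6 y
      have h6z := hM6 z
      have h20 : 0 ≤ ∫ ω, (q y ω * q z ω) ^ 2 ∂P := integral_nonneg fun ω => sq_nonneg _
      nlinarith [hM13pos, hMM, hM23pos]
    have hm6 : ∀ y z w, Integrable (fun ω => q y ω ^ 6) P → Integrable (fun ω => q z ω ^ 6) P →
        Integrable (fun ω => q w ω ^ 6) P →
        ∫ ω, (q y ω * q z ω * q w ω) ^ 2 ∂P ≤ M := by
      intro y z w hy hz hw
      have hpt : ∀ ω, (q y ω * q z ω * q w ω) ^ 2 ≤ (q y ω ^ 6 + q z ω ^ 6 + q w ω ^ 6) / 3 := by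
        intro ω
        have := amgm3 (q y ω ^ 2) (q z ω ^ 2) (q w ω ^ 2) (sq_nonneg _) (sq_nonneg _) (sq_nonneg _)
        nlinarith [this]
      have hint : ∫ ω, (q y ω * q z ω * q w ω) ^ 2 ∂P
          ≤ ∫ ω, (q y ω ^ 6 + q z ω ^ 6 + q w ω ^ 6) / 3 ∂P :=
        integral_mono (P33 y z w hy hz hw) (((hy.add hz).add hw).div_const 3) hpt
      have hyz : Integrable (fun ω => q y ω ^ 6 + q z ω ^ 6) P := hy.add hz
      rw [integral_div, integral_add hyz hw, integral_add hy hz] at hint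
      have h6y := hM6 y
      have h6z := hM6 z
      have h6w := hM6 w
      linarith
    -- ψ = min φ 1 facts
    set ψ : ℝ → ℝ := fun t => min (φ t) 1 with hψdef
    have hψ0 : ∀ t, 0 ≤ ψ t := fun t => le_min (hφ0 t) (by norm_num)
    have hψ1 : ∀ t, ψ t ≤ 1 := fun t => min_le_right _ _
    have hψφ : ∀ t, ψ t ≤ φ t := fun t => min_le_left _ _
    have hψdec : ∀ r s : ℝ, 0 ≤ r → r ≤ s → ψ s ≤ ψ r :=
      fun r s hr hrs => min_le_min (hφdec r s hr hrs) le_rfl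
    have hψsqrt : ∀ u v : ℝ, 0 ≤ v → v ≤ u → ψ u ≤ Real.sqrt (φ v) := by
      intro u v hv hvu
      have h1 : ψ u ≤ ψ v := hψdec v u hv hvu
      have h2 : ψ v ^ 2 ≤ φ v := by
        have := mul_le_mul (hψφ v) (hψ1 v) (hψ0 v) (hφ0 v)
        nlinarith [this]
      exact h1.trans (Real.le_sqrt_of_sq_le h2)
    have hψ2r : ∀ r e1 e2 : ℝ, 0 ≤ e1 → 0 ≤ e2 → e1 ≤ 2 * r → e2 ≤ 2 * r →
        ψ (2 * r) ≤ Real.sqrt (φ e1) * Real.sqrt (φ e2) := by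
      intro r e1 e2 he1 he2 h1 h2
      have ha : ψ (2 * r) ≤ φ e1 := (hψdec e1 (2 * r) he1 h1).trans (hψφ e1)
      have hb : ψ (2 * r) ≤ φ e2 := (hψdec e2 (2 * r) he2 h2).trans (hψφ e2)
      have hsq : ψ (2 * r) ^ 2 ≤ φ e1 * φ e2 := by
        have := mul_le_mul ha hb (hψ0 _) (hφ0 e1)
        nlinarith [this]
      have := Real.le_sqrt_of_sq_le hsq
      rwa [Real.sqrt_mul (hφ0 e1)] at this
    -- variance bound
    have VAR : ∀ f : Ω → ℝ, Integrable f P → Integrable (fun ω => f ω ^ 2) P →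
        Integrable (fun ω => (f ω - ∫ ω', f ω' ∂P) ^ 2) P ∧
        ∫ ω, (f ω - ∫ ω', f ω' ∂P) ^ 2 ∂P ≤ ∫ ω, f ω ^ 2 ∂P := by
      intro f hf hf2
      set c := ∫ ω', f ω' ∂P with hc
      have hre : (fun ω => (f ω - c) ^ 2) = fun ω => f ω ^ 2 - (2 * c) * f ω + c ^ 2 :=
        funext fun ω => by ring
      have hintB : Integrable (fun ω => f ω ^ 2 - (2 * c) * f ω) P := hf2.sub (hf.const_mul _)
      have hintA : Integrable (fun ω => f ω ^ 2 - (2 * c) * f ω + c ^ 2) P :=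
        hintB.add (integrable_const _)
      constructor
      · rw [hre]; exact hintA
      · rw [hre, integral_add hintB (integrable_const _), integral_sub hf2 (hf.const_mul _),
          integral_const_mul, integral_const]
        simp only [measure_univ, ENNReal.toReal_one, probReal_univ, smul_eq_mul, one_mul]
        rw [← hc]
        nlinarith [sq_nonneg c]
    -- pair covariance bound
    have W2 : ∀ y z, Integrable (fun ω => q y ω ^ 6) P → Integrable (fun ω => q z ω ^ 6) P →
        |∫ ω, q y ω * q z ω ∂P| ≤ ψ (2 * dist y z) * M13 := by
      intro y z hy hz
      have hsep : ∀ a ∈ ({y} : Set (EuclideanSpace ℝ (Fin d))),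
          ∀ b ∈ ({z} : Set (EuclideanSpace ℝ (Fin d))), dist y z ≤ dist a b := by
        intro a ha b hb
        simp only [Set.mem_singleton_iff] at ha hb
        subst ha; subst hb
        exact le_refl _
      have hb := hmix {y} {z} (dist y z) dist_nonneg hsep (q y) (q z)
        (hqle _ y rfl) (hqle _ z rfl)
      rw [hmean y, hmean z] at hb
      simp only [sub_zero] at hb
      have hsqle : Real.sqrt ((∫ ω, q y ω ^ 2 ∂P) * ∫ ω, q z ω ^ 2 ∂P) ≤ M13 := by
        rw [← hsqrt13]
        apply Real.sqrt_le_sqrt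
        exact mul_le_mul (hm2 y hy) (hm2 z hz) (integral_nonneg fun ω => sq_nonneg _) hM13pos.le
      have hcs := aux_cs (f := q y) (g := q z) (I2 y hy) (I2 z hz) (P2 y z hy hz)
      rcases min_cases (φ (2 * dist y z)) 1 with ⟨hmin, hle⟩ | ⟨hmin, hle⟩
      · show |∫ ω, q y ω * q z ω ∂P| ≤ min (φ (2 * dist y z)) 1 * M13
        rw [hmin]
        calc |∫ ω, q y ω * q z ω ∂P| ≤ φ (2 * dist y z) *
              Real.sqrt ((∫ ω, q y ω ^ 2 ∂P) * ∫ ω, q z ω ^ 2 ∂P) := hb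
          _ ≤ φ (2 * dist y z) * M13 := by
              exact mul_le_mul_of_nonneg_left hsqle (hφ0 _)
      · show |∫ ω, q y ω * q z ω ∂P| ≤ min (φ (2 * dist y z)) 1 * M13
        rw [hmin, one_mul]
        exact hcs.trans hsqle
    -- 1-3 split bound
    have W13 : ∀ e f g h : EuclideanSpace ℝ (Fin d),
        Integrable (fun ω => q e ω ^ 6) P → Integrable (fun ω => q f ω ^ 6) P →
        Integrable (fun ω => q g ω ^ 6) P → Integrable (fun ω => q h ω ^ 6) P →
        ∀ r : ℝ, 0 ≤ r → r ≤ dist e f → r ≤ dist e g → r ≤ dist e h →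
        |∫ ω, q e ω * q f ω * q g ω * q h ω ∂P| ≤ ψ (2 * r) * M23 := by
      intro e f g h he hf hg hh r hr hrf hrg hrh
      have hsep : ∀ a ∈ ({e} : Set (EuclideanSpace ℝ (Fin d))),
          ∀ b ∈ ({f, g, h} : Set (EuclideanSpace ℝ (Fin d))), r ≤ dist a b := by
        intro a ha b hb
        simp only [Set.mem_singleton_iff] at ha
        simp only [Set.mem_insert_iff, Set.mem_singleton_iff] at hb
        subst ha
        rcases hb with rfl | rfl | rfl <;> assumption
      have hmB : Measurable[⨆ x ∈ ({f, g, h} : Set (EuclideanSpace ℝ (Fin d))),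
          MeasurableSpace.comap (q x) (borel ℝ)] (fun ω => q f ω * q g ω * q h ω) :=
        ((hqle _ f (by simp)).mul (hqle _ g (by simp))).mul (hqle _ h (by simp))
      have hmixb := hmix {e} {f, g, h} r hr hsep (q e) (fun ω => q f ω * q g ω * q h ω)
        (hqle _ e rfl) hmB
      rw [hmean e] at hmixb
      simp only [sub_zero] at hmixb
      have hξint : Integrable (fun ω => q f ω * q g ω * q h ω) P := P3 f g h hf hg hh
      have hξ2 : Integrable (fun ω => (q f ω * q g ω * q h ω) ^ 2) P := P33 f g h hf hg hh
      have hVar := VAR (fun ω => q f ω * q g ω * q h ω) hξint hξ2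
      set c := ∫ ω', q f ω' * q g ω' * q h ω' ∂P with hcdef
      have hmixb' : |∫ ω, q e ω * (q f ω * q g ω * q h ω - c) ∂P| ≤
          φ (2 * r) * Real.sqrt ((∫ ω, q e ω ^ 2 ∂P) *
            (∫ ω, (q f ω * q g ω * q h ω) ^ 2 ∂P)) := hmixb
      have hV1 : Integrable (fun ω => (q f ω * q g ω * q h ω - c) ^ 2) P := hVar.1
      have hV2 : ∫ ω, (q f ω * q g ω * q h ω - c) ^ 2 ∂P
          ≤ ∫ ω, (q f ω * q g ω * q h ω) ^ 2 ∂P := hVar.2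
      have hint_eξ : Integrable (fun ω => q e ω * (q f ω * q g ω * q h ω)) P :=
        (PQ e f g h he hf hg hh).congr (Filter.Eventually.of_forall fun ω => by ring)
      have hprod : Integrable (fun ω => q e ω * (q f ω * q g ω * q h ω - c)) P :=
        (hint_eξ.sub ((I1 e he).const_mul c)).congr
          (Filter.Eventually.of_forall fun ω => by
            simp only [Pi.sub_apply, Pi.add_apply]; ring)
      have hcs := aux_cs (f := q e) (g := fun ω => q f ω * q g ω * q h ω - c)
        (I2 e he) hV1 hprod
      have hsqle : Real.sqrt ((∫ ω, q e ω ^ 2 ∂P) *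
          (∫ ω, (q f ω * q g ω * q h ω) ^ 2 ∂P)) ≤ M23 := by
        rw [← hsqrt1M]
        apply Real.sqrt_le_sqrt
        exact mul_le_mul (hm2 e he) (hm6 f g h hf hg hh)
          (integral_nonneg fun ω => sq_nonneg _) hM13pos.le
      have hbound : |∫ ω, q e ω * (q f ω * q g ω * q h ω - c) ∂P| ≤ ψ (2 * r) * M23 := by
        rcases min_cases (φ (2 * r)) 1 with ⟨hmin, hle⟩ | ⟨hmin, hle⟩
        · show _ ≤ min (φ (2 * r)) 1 * M23
          rw [hmin]
          exact hmixb'.trans (mul_le_mul_of_nonneg_left hsqle (hφ0 _))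
        · show _ ≤ min (φ (2 * r)) 1 * M23
          rw [hmin, one_mul]
          refine (hcs.trans ?_).trans hsqle
          apply Real.sqrt_le_sqrt
          exact mul_le_mul_of_nonneg_left hV2 (integral_nonneg fun ω => sq_nonneg _)
      have hexp : ∫ ω, q e ω * (q f ω * q g ω * q h ω - c) ∂P
          = ∫ ω, q e ω * (q f ω * q g ω * q h ω) ∂P := by
        have h1 : (fun ω => q e ω * (q f ω * q g ω * q h ω - c))
            = fun ω => q e ω * (q f ω * q g ω * q h ω) - c * q e ω := funext fun ω => by ring
        rw [h1, integral_sub hint_eξ ((I1 e he).const_mul c), integral_const_mul, hmean e,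
          mul_zero, sub_zero]
      have hfin : (fun ω => q e ω * q f ω * q g ω * q h ω)
          = fun ω => q e ω * (q f ω * q g ω * q h ω) := funext fun ω => by ring
      rw [hfin, ← hexp]
      exact hbound
    -- 2-2 split bound
    have W22 : ∀ a b c e : EuclideanSpace ℝ (Fin d),
        Integrable (fun ω => q a ω ^ 6) P → Integrable (fun ω => q b ω ^ 6) P →
        Integrable (fun ω => q c ω ^ 6) P → Integrable (fun ω => q e ω ^ 6) P →
        ∀ r : ℝ, 0 ≤ r → r ≤ dist a c → r ≤ dist a e → r ≤ dist b c → r ≤ dist b e →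
        |∫ ω, q a ω * q b ω * q c ω * q e ω ∂P| ≤
          (ψ (2 * dist a b) * ψ (2 * dist c e) + ψ (2 * r)) * M23 := by
      intro a b c e ha hb hc he r hr hac hae hbc hbe
      have hsep : ∀ u ∈ ({a, b} : Set (EuclideanSpace ℝ (Fin d))),
          ∀ v ∈ ({c, e} : Set (EuclideanSpace ℝ (Fin d))), r ≤ dist u v := by
        intro u hu v hv
        simp only [Set.mem_insert_iff, Set.mem_singleton_iff] at hu hv
        rcases hu with rfl | rfl <;> rcases hv with rfl | rfl <;> assumption
      have hmA : Measurable[⨆ x ∈ ({a, b} : Set (EuclideanSpace ℝ (Fin d))),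
          MeasurableSpace.comap (q x) (borel ℝ)] (fun ω => q a ω * q b ω) :=
        (hqle _ a (by simp)).mul (hqle _ b (by simp))
      have hmB : Measurable[⨆ x ∈ ({c, e} : Set (EuclideanSpace ℝ (Fin d))),
          MeasurableSpace.comap (q x) (borel ℝ)] (fun ω => q c ω * q e ω) :=
        (hqle _ c (by simp)).mul (hqle _ e (by simp))
      have hmixb := hmix {a, b} {c, e} r hr hsep (fun ω => q a ω * q b ω)
        (fun ω => q c ω * q e ω) hmA hmB
      have hηint : Integrable (fun ω => q a ω * q b ω) P := P2 a b ha hb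
      have hη2 : Integrable (fun ω => (q a ω * q b ω) ^ 2) P := P22 a b ha hb
      have hξint : Integrable (fun ω => q c ω * q e ω) P := P2 c e hc he
      have hξ2 : Integrable (fun ω => (q c ω * q e ω) ^ 2) P := P22 c e hc he
      have hVarη := VAR (fun ω => q a ω * q b ω) hηint hη2
      have hVarξ := VAR (fun ω => q c ω * q e ω) hξint hξ2
      set s := ∫ ω', q a ω' * q b ω' ∂P with hsdef
      set t := ∫ ω', q c ω' * q e ω' ∂P with htdef
      have hmixb' : |∫ ω, (q a ω * q b ω - s) * (q c ω * q e ω - t) ∂P| ≤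
          φ (2 * r) * Real.sqrt ((∫ ω, (q a ω * q b ω) ^ 2 ∂P) *
            (∫ ω, (q c ω * q e ω) ^ 2 ∂P)) := hmixb
      have hVη1 : Integrable (fun ω => (q a ω * q b ω - s) ^ 2) P := hVarη.1
      have hVη2 : ∫ ω, (q a ω * q b ω - s) ^ 2 ∂P ≤ ∫ ω, (q a ω * q b ω) ^ 2 ∂P := hVarη.2
      have hVξ1 : Integrable (fun ω => (q c ω * q e ω - t) ^ 2) P := hVarξ.1
      have hVξ2 : ∫ ω, (q c ω * q e ω - t) ^ 2 ∂P ≤ ∫ ω, (q c ω * q e ω) ^ 2 ∂P := hVarξ.2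
      have hint_ηξ : Integrable (fun ω => (q a ω * q b ω) * (q c ω * q e ω)) P :=
        PQ a b c e ha hb hc he
      have hintB : Integrable (fun ω => (q a ω * q b ω) * (q c ω * q e ω)
          - s * (q c ω * q e ω)) P := hint_ηξ.sub (hξint.const_mul s)
      have hintC : Integrable (fun ω => (q a ω * q b ω) * (q c ω * q e ω)
          - s * (q c ω * q e ω) - t * (q a ω * q b ω)) P := hintB.sub (hηint.const_mul t)
      have hprod : Integrable (fun ω => (q a ω * q b ω - s) * (q c ω * q e ω - t)) P :=
        (hintC.add (integrable_const (s * t))).congr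
          (Filter.Eventually.of_forall fun ω => by
            simp only [Pi.sub_apply, Pi.add_apply]; ring)
      have hcs := aux_cs (f := fun ω => q a ω * q b ω - s) (g := fun ω => q c ω * q e ω - t)
        hVη1 hVξ1 hprod
      have hsqle : Real.sqrt ((∫ ω, (q a ω * q b ω) ^ 2 ∂P) *
          (∫ ω, (q c ω * q e ω) ^ 2 ∂P)) ≤ M23 := by
        rw [← hsqrt23]
        apply Real.sqrt_le_sqrt
        exact mul_le_mul (hm4 a b ha hb) (hm4 c e hc he)
          (integral_nonneg fun ω => sq_nonneg _) hM23pos.le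
      have hcov : |∫ ω, (q a ω * q b ω - s) * (q c ω * q e ω - t) ∂P| ≤ ψ (2 * r) * M23 := by
        rcases min_cases (φ (2 * r)) 1 with ⟨hmin, hle⟩ | ⟨hmin, hle⟩
        · show _ ≤ min (φ (2 * r)) 1 * M23
          rw [hmin]
          exact hmixb'.trans (mul_le_mul_of_nonneg_left hsqle (hφ0 _))
        · show _ ≤ min (φ (2 * r)) 1 * M23
          rw [hmin, one_mul]
          refine (hcs.trans ?_).trans hsqle
          apply Real.sqrt_le_sqrt
          exact mul_le_mul hVη2 hVξ2 (integral_nonneg fun ω => sq_nonneg _)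
            (integral_nonneg fun ω => sq_nonneg _)
      have hexp : ∫ ω, (q a ω * q b ω - s) * (q c ω * q e ω - t) ∂P
          = ∫ ω, (q a ω * q b ω) * (q c ω * q e ω) ∂P - s * t := by
        have h1 : (fun ω => (q a ω * q b ω - s) * (q c ω * q e ω - t))
            = fun ω => (q a ω * q b ω) * (q c ω * q e ω) - s * (q c ω * q e ω)
                - t * (q a ω * q b ω) + s * t := funext fun ω => by ring
        rw [h1, integral_add hintC (integrable_const _), integral_sub hintB (hηint.const_mul t),
          integral_sub hint_ηξ (hξint.const_mul s), integral_const_mul, integral_const_mul,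
          integral_const]
        simp only [measure_univ, ENNReal.toReal_one, probReal_univ, smul_eq_mul, one_mul]
        rw [← hsdef, ← htdef]
        ring
      have hst : |s * t| ≤ (ψ (2 * dist a b) * ψ (2 * dist c e)) * M23 := by
        rw [abs_mul]
        have h1 : |s| ≤ ψ (2 * dist a b) * M13 := W2 a b ha hb
        have h2 : |t| ≤ ψ (2 * dist c e) * M13 := W2 c e hc he
        calc |s| * |t| ≤ (ψ (2 * dist a b) * M13) * (ψ (2 * dist c e) * M13) :=
              mul_le_mul h1 h2 (abs_nonneg _) (mul_nonneg (hψ0 _) hM13pos.le)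
          _ = (ψ (2 * dist a b) * ψ (2 * dist c e)) * (M13 * M13) := by ring
          _ = (ψ (2 * dist a b) * ψ (2 * dist c e)) * M23 := by rw [h1323]
      have hfin : (fun ω => q a ω * q b ω * q c ω * q e ω)
          = fun ω => (q a ω * q b ω) * (q c ω * q e ω) := funext fun ω => by ring
      rw [hfin]
      have hval : ∫ ω, (q a ω * q b ω) * (q c ω * q e ω) ∂P
          = (∫ ω, (q a ω * q b ω - s) * (q c ω * q e ω - t) ∂P) + s * t := by
        rw [hexp]; ring
      rw [hval, add_mul]
      calc |(∫ ω, (q a ω * q b ω - s) * (q c ω * q e ω - t) ∂P) + s * t|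
          ≤ |∫ ω, (q a ω * q b ω - s) * (q c ω * q e ω - t) ∂P| + |s * t| := abs_add_le _ _
        _ ≤ ψ (2 * r) * M23 + (ψ (2 * dist a b) * ψ (2 * dist c e)) * M23 := add_le_add hcov hst
        _ = ψ (2 * dist a b) * ψ (2 * dist c e) * M23 + ψ (2 * r) * M23 := by ring
    -- case where one point is isolated
    have CORE13 : ∀ a b c e : EuclideanSpace ℝ (Fin d),
        Integrable (fun ω => q a ω ^ 6) P → Integrable (fun ω => q b ω ^ 6) P →
        Integrable (fun ω => q c ω ^ 6) P → Integrable (fun ω => q e ω ^ 6) P →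
        dist a b ≤ dist a c →
        dist a c ≤ dist b c → dist a c ≤ dist a e → dist a c ≤ dist b e →
        2 * dist a c < dist c e →
        Real.sqrt (φ (dist a b)) * Real.sqrt (φ (dist c e)) ≤ S →
        Real.sqrt (φ (dist a c)) * Real.sqrt (φ (dist b e)) ≤ S →
        Real.sqrt (φ (dist a e)) * Real.sqrt (φ (dist b c)) ≤ S →
        |∫ ω, q a ω * q b ω * q c ω * q e ω ∂P| ≤ 2 * S * M23 := by
      intro a b c e ha hb hc he hab hacbc hacae hacbe hfar hq1 hq2 hq3
      set r2 := min (dist e a) (min (dist e b) (dist e c)) with hr2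
      have hr20 : 0 ≤ r2 := le_min dist_nonneg (le_min dist_nonneg dist_nonneg)
      have hrea : r2 ≤ dist e a := min_le_left _ _
      have hreb : r2 ≤ dist e b := (min_le_right _ _).trans (min_le_left _ _)
      have hrec : r2 ≤ dist e c := (min_le_right _ _).trans (min_le_right _ _)
      have hW := W13 e a b c he ha hb hc r2 hr20 hrea hreb hrec
      have hre : (fun ω => q a ω * q b ω * q c ω * q e ω)
          = fun ω => q e ω * q a ω * q b ω * q c ω := funext fun ω => by ring
      rw [hre]
      have hd0 : (0:ℝ) ≤ dist a c := dist_nonneg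
      have hge : dist a c ≤ r2 := by
        refine le_min ?_ (le_min ?_ ?_)
        · rw [dist_comm e a]; exact hacae
        · rw [dist_comm e b]; exact hacbe
        · rw [dist_comm e c]; linarith
      have hatt : r2 = dist e a ∨ r2 = dist e b ∨ r2 = dist e c := by
        rw [hr2]
        rcases min_cases (dist e a) (min (dist e b) (dist e c)) with ⟨h, _⟩ | ⟨h, _⟩
        · exact Or.inl h
        · rcases min_cases (dist e b) (dist e c) with ⟨h2, _⟩ | ⟨h2, _⟩
          · exact Or.inr (Or.inl (h.trans h2))
          · exact Or.inr (Or.inr (h.trans h2))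
      have hfinish : ∀ T : ℝ, ψ (2 * r2) ≤ T → T ≤ S →
          |∫ ω, q e ω * q a ω * q b ω * q c ω ∂P| ≤ 2 * S * M23 := by
        intro T hT hTS
        calc |∫ ω, q e ω * q a ω * q b ω * q c ω ∂P| ≤ ψ (2 * r2) * M23 := hW
          _ ≤ S * M23 := mul_le_mul_of_nonneg_right (hT.trans hTS) hM23pos.le
          _ ≤ 2 * S * M23 := by nlinarith [mul_nonneg hS0 hM23pos.le]
      rcases hatt with heq | heq | heq
      · -- matching {a e} {b c}
        refine hfinish _ (hψ2r r2 (dist a e) (dist b c) dist_nonneg dist_nonneg ?_ ?_) hq3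
        · rw [dist_comm a e, heq.symm] at *
          linarith
        · have htr : dist b c ≤ dist b a + dist a c := dist_triangle b a c
          rw [dist_comm b a] at htr
          linarith
      · -- matching {a c} {b e}
        refine hfinish _ (hψ2r r2 (dist a c) (dist b e) dist_nonneg dist_nonneg ?_ ?_) hq2
        · linarith
        · rw [dist_comm b e, heq.symm] at *
          linarith
      · -- matching {a b} {c e}
        refine hfinish _ (hψ2r r2 (dist a b) (dist c e) dist_nonneg dist_nonneg ?_ ?_) hq1
        · linarith
        · rw [dist_comm c e, heq.symm] at *
          linarith
    -- main core lemma: (a,b) realizes the minimal pairwise distance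
    have CORE : ∀ a b c e : EuclideanSpace ℝ (Fin d),
        Integrable (fun ω => q a ω ^ 6) P → Integrable (fun ω => q b ω ^ 6) P →
        Integrable (fun ω => q c ω ^ 6) P → Integrable (fun ω => q e ω ^ 6) P →
        dist a b ≤ dist a c → dist a b ≤ dist a e → dist a b ≤ dist b c →
        dist a b ≤ dist b e → dist a b ≤ dist c e →
        Real.sqrt (φ (dist a b)) * Real.sqrt (φ (dist c e)) ≤ S →
        Real.sqrt (φ (dist a c)) * Real.sqrt (φ (dist b e)) ≤ S →
        Real.sqrt (φ (dist a e)) * Real.sqrt (φ (dist b c)) ≤ S →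
        |∫ ω, q a ω * q b ω * q c ω * q e ω ∂P| ≤ 2 * S * M23 := by
      intro a b c e ha hb hc he h1 h2 h3 h4 h5 hq1 hq2 hq3
      set r1 := min (min (dist a c) (dist b c)) (min (dist a e) (dist b e)) with hr1
      have hr10 : 0 ≤ r1 := le_min (le_min dist_nonneg dist_nonneg) (le_min dist_nonneg dist_nonneg)
      have hr1ac : r1 ≤ dist a c := (min_le_left _ _).trans (min_le_left _ _)
      have hr1bc : r1 ≤ dist b c := (min_le_left _ _).trans (min_le_right _ _)
      have hr1ae : r1 ≤ dist a e := (min_le_right _ _).trans (min_le_left _ _)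
      have hr1be : r1 ≤ dist b e := (min_le_right _ _).trans (min_le_right _ _)
      have habr1 : dist a b ≤ r1 := le_min (le_min h1 h3) (le_min h2 h4)
      by_cases hcase : dist c e ≤ 2 * r1
      · have hW := W22 a b c e ha hb hc he r1 hr10 hr1ac hr1ae hr1bc hr1be
        refine hW.trans ?_
        have hA : ψ (2 * dist a b) ≤ Real.sqrt (φ (dist a b)) :=
          hψsqrt _ _ dist_nonneg (by linarith [dist_nonneg (x := a) (y := b)])
        have hB : ψ (2 * dist c e) ≤ Real.sqrt (φ (dist c e)) :=
          hψsqrt _ _ dist_nonneg (by linarith [dist_nonneg (x := c) (y := e)])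
        have hC : ψ (2 * r1) ≤ Real.sqrt (φ (dist a b)) * Real.sqrt (φ (dist c e)) :=
          hψ2r r1 _ _ dist_nonneg dist_nonneg (by linarith) hcase
        have hAB : ψ (2 * dist a b) * ψ (2 * dist c e)
            ≤ Real.sqrt (φ (dist a b)) * Real.sqrt (φ (dist c e)) :=
          mul_le_mul hA hB (hψ0 _) (Real.sqrt_nonneg _)
        have hsum : ψ (2 * dist a b) * ψ (2 * dist c e) + ψ (2 * r1)
            ≤ 2 * (Real.sqrt (φ (dist a b)) * Real.sqrt (φ (dist c e))) := by linarith
        calc (ψ (2 * dist a b) * ψ (2 * dist c e) + ψ (2 * r1)) * M23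
            ≤ (2 * (Real.sqrt (φ (dist a b)) * Real.sqrt (φ (dist c e)))) * M23 :=
              mul_le_mul_of_nonneg_right hsum hM23pos.le
          _ ≤ 2 * S * M23 := by nlinarith [hq1, hM23pos.le]
      · push_neg at hcase
        have hatt : r1 = dist a c ∨ r1 = dist b c ∨ r1 = dist a e ∨ r1 = dist b e := by
          rw [hr1]
          rcases min_cases (min (dist a c) (dist b c)) (min (dist a e) (dist b e))
            with ⟨h, _⟩ | ⟨h, _⟩
          · rcases min_cases (dist a c) (dist b c) with ⟨h2, _⟩ | ⟨h2, _⟩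
            · exact Or.inl (h.trans h2)
            · exact Or.inr (Or.inl (h.trans h2))
          · rcases min_cases (dist a e) (dist b e) with ⟨h2, _⟩ | ⟨h2, _⟩
            · exact Or.inr (Or.inr (Or.inl (h.trans h2)))
            · exact Or.inr (Or.inr (Or.inr (h.trans h2)))
        rcases hatt with heq | heq | heq | heq
        · exact CORE13 a b c e ha hb hc he h1 (heq ▸ hr1bc) (heq ▸ hr1ae) (heq ▸ hr1be)
            (heq ▸ hcase) hq1 hq2 hq3
        · have hre : (fun ω => q a ω * q b ω * q c ω * q e ω)
              = fun ω => q b ω * q a ω * q c ω * q e ω := funext fun ω => by ring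
          rw [hre]
          refine CORE13 b a c e hb ha hc he ?_ (heq ▸ hr1ac) (heq ▸ hr1be) (heq ▸ hr1ae)
            (heq ▸ hcase) ?_ ?_ ?_
          · rw [dist_comm b a]; exact h3
          · rw [dist_comm b a]; exact hq1
          · rw [mul_comm]; exact hq3
          · rw [mul_comm]; exact hq2
        · have hre : (fun ω => q a ω * q b ω * q c ω * q e ω)
              = fun ω => q a ω * q b ω * q e ω * q c ω := funext fun ω => by ring
          rw [hre]
          refine CORE13 a b e c ha hb he hc h2 (heq ▸ hr1be) (heq ▸ hr1ac) (heq ▸ hr1bc)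
            ?_ ?_ ?_ ?_
          · rw [dist_comm e c]; exact heq ▸ hcase
          · rw [dist_comm e c]; exact hq1
          · exact hq3
          · exact hq2
        · have hre : (fun ω => q a ω * q b ω * q c ω * q e ω)
              = fun ω => q b ω * q a ω * q e ω * q c ω := funext fun ω => by ring
          rw [hre]
          refine CORE13 b a e c hb ha he hc ?_ (heq ▸ hr1ae) (heq ▸ hr1bc) (heq ▸ hr1ac)
            ?_ ?_ ?_ ?_
          · rw [dist_comm b a]; exact h4
          · rw [dist_comm e c]; exact heq ▸ hcase
          · rw [dist_comm b a, dist_comm e c]; exact hq1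
          · rw [mul_comm]; exact hq2
          · rw [mul_comm]; exact hq3
    -- choose the pair with minimal distance
    obtain ⟨p, hp, hpmin⟩ := Finset.exists_min_image
      ((Finset.univ : Finset (Fin 4 × Fin 4)).filter fun p => p.1 < p.2)
      (fun p => dist (x p.1) (x p.2)) ⟨(0, 1), by decide⟩
    rcases p with ⟨i, j⟩
    fin_cases i <;> fin_cases j
    · exact absurd hp (by decide)
    · -- min pair (0,1)
      have hre : (fun ω => q (x 0) ω * q (x 1) ω * q (x 2) ω * q (x 3) ω)
          = fun ω => q (x 0) ω * q (x 1) ω * q (x 2) ω * q (x 3) ω := funext fun ω => by ring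
      rw [hre]
      exact CORE (x 0) (x 1) (x 2) (x 3) (hgood 0) (hgood 1) (hgood 2) (hgood 3)
        (by
        have h : dist (x 0) (x 1) ≤ dist (x 0) (x 2) := hpmin (0, 2) (by decide)
        exact h)
        (by
        have h : dist (x 0) (x 1) ≤ dist (x 0) (x 3) := hpmin (0, 3) (by decide)
        exact h)
        (by
        have h : dist (x 0) (x 1) ≤ dist (x 1) (x 2) := hpmin (1, 2) (by decide)
        exact h)
        (by
        have h : dist (x 0) (x 1) ≤ dist (x 1) (x 3) := hpmin (1, 3) (by decide)
        exact h)
        (by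
        have h : dist (x 0) (x 1) ≤ dist (x 2) (x 3) := hpmin (2, 3) (by decide)
        exact h)
        (by
        exact hS2)
        (by
        exact hS1)
        (by
        exact hS3)
    · -- min pair (0,2)
      have hre : (fun ω => q (x 0) ω * q (x 1) ω * q (x 2) ω * q (x 3) ω)
          = fun ω => q (x 0) ω * q (x 2) ω * q (x 1) ω * q (x 3) ω := funext fun ω => by ring
      rw [hre]
      exact CORE (x 0) (x 2) (x 1) (x 3) (hgood 0) (hgood 2) (hgood 1) (hgood 3)
        (by
        have h : dist (x 0) (x 2) ≤ dist (x 0) (x 1) := hpmin (0, 1) (by decide)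
        exact h)
        (by
        have h : dist (x 0) (x 2) ≤ dist (x 0) (x 3) := hpmin (0, 3) (by decide)
        exact h)
        (by
        have h : dist (x 0) (x 2) ≤ dist (x 1) (x 2) := hpmin (1, 2) (by decide)
        rw [dist_comm (x 2) (x 1)]
        exact h)
        (by
        have h : dist (x 0) (x 2) ≤ dist (x 2) (x 3) := hpmin (2, 3) (by decide)
        exact h)
        (by
        have h : dist (x 0) (x 2) ≤ dist (x 1) (x 3) := hpmin (1, 3) (by decide)
        exact h)
        (by
        exact hS1)
        (by
        exact hS2)
        (by
        rw [dist_comm (x 2) (x 1)]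
        exact hS3)
    · -- min pair (0,3)
      have hre : (fun ω => q (x 0) ω * q (x 1) ω * q (x 2) ω * q (x 3) ω)
          = fun ω => q (x 0) ω * q (x 3) ω * q (x 1) ω * q (x 2) ω := funext fun ω => by ring
      rw [hre]
      exact CORE (x 0) (x 3) (x 1) (x 2) (hgood 0) (hgood 3) (hgood 1) (hgood 2)
        (by
        have h : dist (x 0) (x 3) ≤ dist (x 0) (x 1) := hpmin (0, 1) (by decide)
        exact h)
        (by
        have h : dist (x 0) (x 3) ≤ dist (x 0) (x 2) := hpmin (0, 2) (by decide)
        exact h)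
        (by
        have h : dist (x 0) (x 3) ≤ dist (x 1) (x 3) := hpmin (1, 3) (by decide)
        rw [dist_comm (x 3) (x 1)]
        exact h)
        (by
        have h : dist (x 0) (x 3) ≤ dist (x 2) (x 3) := hpmin (2, 3) (by decide)
        rw [dist_comm (x 3) (x 2)]
        exact h)
        (by
        have h : dist (x 0) (x 3) ≤ dist (x 1) (x 2) := hpmin (1, 2) (by decide)
        exact h)
        (by
        exact hS3)
        (by
        rw [dist_comm (x 3) (x 2)]
        exact hS2)
        (by
        rw [dist_comm (x 3) (x 1)]
        exact hS1)
    · exact absurd hp (by decide)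
    · exact absurd hp (by decide)
    · -- min pair (1,2)
      have hre : (fun ω => q (x 0) ω * q (x 1) ω * q (x 2) ω * q (x 3) ω)
          = fun ω => q (x 1) ω * q (x 2) ω * q (x 0) ω * q (x 3) ω := funext fun ω => by ring
      rw [hre]
      exact CORE (x 1) (x 2) (x 0) (x 3) (hgood 1) (hgood 2) (hgood 0) (hgood 3)
        (by
        have h : dist (x 1) (x 2) ≤ dist (x 0) (x 1) := hpmin (0, 1) (by decide)
        rw [dist_comm (x 1) (x 0)]
        exact h)
        (by
        have h : dist (x 1) (x 2) ≤ dist (x 1) (x 3) := hpmin (1, 3) (by decide)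
        exact h)
        (by
        have h : dist (x 1) (x 2) ≤ dist (x 0) (x 2) := hpmin (0, 2) (by decide)
        rw [dist_comm (x 2) (x 0)]
        exact h)
        (by
        have h : dist (x 1) (x 2) ≤ dist (x 2) (x 3) := hpmin (2, 3) (by decide)
        exact h)
        (by
        have h : dist (x 1) (x 2) ≤ dist (x 0) (x 3) := hpmin (0, 3) (by decide)
        exact h)
        (by
        rw [mul_comm]
        exact hS3)
        (by
        rw [dist_comm (x 1) (x 0)]
        exact hS2)
        (by
        rw [dist_comm (x 2) (x 0)]
        rw [mul_comm]
        exact hS1)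
    · -- min pair (1,3)
      have hre : (fun ω => q (x 0) ω * q (x 1) ω * q (x 2) ω * q (x 3) ω)
          = fun ω => q (x 1) ω * q (x 3) ω * q (x 0) ω * q (x 2) ω := funext fun ω => by ring
      rw [hre]
      exact CORE (x 1) (x 3) (x 0) (x 2) (hgood 1) (hgood 3) (hgood 0) (hgood 2)
        (by
        have h : dist (x 1) (x 3) ≤ dist (x 0) (x 1) := hpmin (0, 1) (by decide)
        rw [dist_comm (x 1) (x 0)]
        exact h)
        (by
        have h : dist (x 1) (x 3) ≤ dist (x 1) (x 2) := hpmin (1, 2) (by decide)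
        exact h)
        (by
        have h : dist (x 1) (x 3) ≤ dist (x 0) (x 3) := hpmin (0, 3) (by decide)
        rw [dist_comm (x 3) (x 0)]
        exact h)
        (by
        have h : dist (x 1) (x 3) ≤ dist (x 2) (x 3) := hpmin (2, 3) (by decide)
        rw [dist_comm (x 3) (x 2)]
        exact h)
        (by
        have h : dist (x 1) (x 3) ≤ dist (x 0) (x 2) := hpmin (0, 2) (by decide)
        exact h)
        (by
        rw [mul_comm]
        exact hS1)
        (by
        rw [dist_comm (x 1) (x 0), dist_comm (x 3) (x 2)]
        exact hS2)
        (by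
        rw [dist_comm (x 3) (x 0)]
        rw [mul_comm]
        exact hS3)
    · exact absurd hp (by decide)
    · exact absurd hp (by decide)
    · exact absurd hp (by decide)
    · -- min pair (2,3)
      have hre : (fun ω => q (x 0) ω * q (x 1) ω * q (x 2) ω * q (x 3) ω)
          = fun ω => q (x 2) ω * q (x 3) ω * q (x 0) ω * q (x 1) ω := funext fun ω => by ring
      rw [hre]
      exact CORE (x 2) (x 3) (x 0) (x 1) (hgood 2) (hgood 3) (hgood 0) (hgood 1)
        (by
        have h : dist (x 2) (x 3) ≤ dist (x 0) (x 2) := hpmin (0, 2) (by decide)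
        rw [dist_comm (x 2) (x 0)]
        exact h)
        (by
        have h : dist (x 2) (x 3) ≤ dist (x 1) (x 2) := hpmin (1, 2) (by decide)
        rw [dist_comm (x 2) (x 1)]
        exact h)
        (by
        have h : dist (x 2) (x 3) ≤ dist (x 0) (x 3) := hpmin (0, 3) (by decide)
        rw [dist_comm (x 3) (x 0)]
        exact h)
        (by
        have h : dist (x 2) (x 3) ≤ dist (x 1) (x 3) := hpmin (1, 3) (by decide)
        rw [dist_comm (x 3) (x 1)]
        exact h)
        (by
        have h : dist (x 2) (x 3) ≤ dist (x 0) (x 1) := hpmin (0, 1) (by decide)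
        exact h)
        (by
        rw [mul_comm]
        exact hS2)
        (by
        rw [dist_comm (x 2) (x 0), dist_comm (x 3) (x 1)]
        exact hS1)
        (by
        rw [dist_comm (x 2) (x 1), dist_comm (x 3) (x 0)]
        rw [mul_comm]
        exact hS3)
    · exact absurd hp (by decide)
    · exact absurd hp (by decide)
    · exact absurd hp (by decide)
    · exact absurd hp (by decide)
  · -- bad case: some (hence every) sixth moment is non-integrable
    push_neg at hgood
    obtain ⟨i0, hi0⟩ := hgood
    have hbad6 : ∀ y, ¬ Integrable (fun ω => q y ω ^ 6) P := fun y h => hi0 (hint6 y (x i0) h)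
    have hz2 : ∀ y, ∫ ω, q y ω ^ 2 ∂P = 0 := by
      intro y
      apply integral_undef
      intro h2
      exact hbad6 y (Lstep2 y (Lstep1 y h2))
    have s1 : ∫ ω, q (x 2) ω * q (x 3) ω ∂P = 0 := by
      have hb := hmixU (q (x 2)) (q (x 3)) (hqleU _) (hqleU _)
      rw [hmean (x 2), hmean (x 3), hz2 (x 2), zero_mul, Real.sqrt_zero, mul_zero] at hb
      have := abs_nonpos_iff.mp hb
      simpa [sub_zero] using this
    have s2 : ∫ ω, q (x 1) ω * (q (x 2) ω * q (x 3) ω) ∂P = 0 := by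
      have hb := hmixU (q (x 1)) (fun ω => q (x 2) ω * q (x 3) ω) (hqleU _)
        ((hqleU _).mul (hqleU _))
      rw [hmean (x 1), s1, hz2 (x 1), zero_mul, Real.sqrt_zero, mul_zero] at hb
      have := abs_nonpos_iff.mp hb
      simpa [sub_zero] using this
    have s3 : ∫ ω, q (x 0) ω * (q (x 1) ω * (q (x 2) ω * q (x 3) ω)) ∂P = 0 := by
      have hb := hmixU (q (x 0)) (fun ω => q (x 1) ω * (q (x 2) ω * q (x 3) ω)) (hqleU _)
        ((hqleU _).mul ((hqleU _).mul (hqleU _)))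
      rw [hmean (x 0), s2, hz2 (x 0), zero_mul, Real.sqrt_zero, mul_zero] at hb
      have := abs_nonpos_iff.mp hb
      simpa [sub_zero] using this
    have hre : (fun ω => q (x 0) ω * q (x 1) ω * q (x 2) ω * q (x 3) ω)
        = fun ω => q (x 0) ω * (q (x 1) ω * (q (x 2) ω * q (x 3) ω)) :=
      funext fun ω => by ring
    rw [hre, s3, abs_zero]
    exact mul_nonneg (mul_nonneg (by norm_num) hS0) hM23
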